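/- Let u : ℂ → ℂ be a smooth (infinitely real-differentiable) function with compact support and let p ∈ ℂ. Then ∫_ℂ (∂̄u)(z)/(z − p) dA(z) = −π·u(p), where dA denotes Lebesgue measure on ℂ ≅ ℝ². (This is the one-dimensional case of the Stokes–Leray formula ∫_M γ ∧ du = 2πi ∫_N res_N γ ∧ u, applied to M = ℂ, the meromorphic 1-form γ = dz/(z − p) with logarithmic singularity at N = {p}, and res_N γ = 1, using dz ∧ dz̄ = −2i dA.) -/

import Mathlib

open MeasureTheory

/-- The Wirtinger derivative `∂F/∂z̄` of a map `F : ℂ → ℂ`, defined via the real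
Fréchet derivative: `∂̄F(z) = (1/2)·(DF(z)(1) + i·DF(z)(i))`. -/
noncomputable def dbar (F : ℂ → ℂ) (z : ℂ) : ℂ :=
  (1 / 2 : ℂ) * (fderiv ℝ F z 1 + Complex.I * fderiv ℝ F z Complex.I)

namespace CPompeiu

open Set Real Filter

/-- `e θ = exp (i θ)`. -/
noncomputable def e (θ : ℝ) : ℂ := Complex.exp (θ * Complex.I)

lemma e_def (θ : ℝ) : e θ = Real.cos θ + Real.sin θ * Complex.I := by
  rw [e, Complex.exp_mul_I, ← Complex.ofReal_cos, ← Complex.ofReal_sin]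

lemma abs_e (θ : ℝ) : ‖e θ‖ = 1 := Complex.norm_exp_ofReal_mul_I θ

lemma e_ne (θ : ℝ) : e θ ≠ 0 := Complex.exp_ne_zero _

lemma inv_e (θ : ℝ) : (e θ)⁻¹ = (Real.cos θ : ℂ) - Real.sin θ * Complex.I := by
  have h : e θ * ((Real.cos θ : ℂ) - Real.sin θ * Complex.I) = 1 := by
    rw [e_def]
    have h1 : ((Real.cos θ : ℂ) + Real.sin θ * Complex.I) *
        ((Real.cos θ : ℂ) - Real.sin θ * Complex.I)
        = (Real.cos θ : ℂ) ^ 2 + (Real.sin θ : ℂ) ^ 2 := by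
      have := Complex.I_sq
      ring_nf
      rw [Complex.I_sq]
      ring
    rw [h1]
    norm_cast
    rw [← Real.sin_sq_add_cos_sq θ]
    ring
  exact inv_eq_of_mul_eq_one_right h

lemma hasDerivAt_e (θ : ℝ) : HasDerivAt e (Complex.I * e θ) θ := by
  have h1 : HasDerivAt (fun z : ℂ => z * Complex.I) Complex.I (θ : ℂ) := by
    simpa using (hasDerivAt_id (θ : ℂ)).mul_const Complex.I
  have h2 := (Complex.hasDerivAt_exp ((θ : ℂ) * Complex.I)).comp (θ : ℂ) h1
  have h3 := h2.comp_ofReal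
  rw [mul_comm (Complex.exp ((θ : ℂ) * Complex.I)) Complex.I] at h3
  exact h3

lemma habs (r θ : ℝ) : r ≤ ‖(r : ℂ) * e θ‖ := by
  rw [norm_mul, abs_e, mul_one, Complex.norm_real, Real.norm_eq_abs]
  exact le_abs_self r

/-- The key pointwise Wirtinger identity. -/
lemma key (L : ℂ →L[ℝ] ℂ) (θ : ℝ) :
    (L 1 + Complex.I * L Complex.I) * (e θ)⁻¹
      = L (e θ) + Complex.I * L (Complex.I * e θ) := by
  have hc : e θ = (Real.cos θ) • (1 : ℂ) + (Real.sin θ) • Complex.I := by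
    rw [e_def]; simp [Complex.real_smul]
  have hc2 : Complex.I * e θ = (-Real.sin θ) • (1 : ℂ) + (Real.cos θ) • Complex.I := by
    rw [e_def]
    simp only [Complex.real_smul, Complex.ofReal_neg, smul_eq_mul, mul_one]
    ring_nf
    rw [Complex.I_sq]
    ring
  rw [inv_e, hc2, hc, map_add, map_add, _root_.map_smul, _root_.map_smul, _root_.map_smul, _root_.map_smul]
  simp only [Complex.real_smul, Complex.ofReal_neg, smul_eq_mul, mul_one]
  linear_combination (-(L Complex.I * (Real.sin θ : ℂ))) * Complex.I_sq

lemma aux (u : ℂ → ℂ) (hu : ContDiff ℝ (⊤ : ℕ∞) u) (hsupp : HasCompactSupport u) :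
    ∫ z : ℂ, dbar u z / z = -(Real.pi : ℂ) * u 0 := by
  have udiff : Differentiable ℝ u := hu.differentiable (by simp)
  have fcont : Continuous (fderiv ℝ u) := hu.continuous_fderiv (by simp)
  obtain ⟨R, hR⟩ := hsupp.isBounded.subset_closedBall 0
  have hu0 : ∀ z : ℂ, R < ‖z‖ → u z = 0 := by
    intro z hz
    apply image_eq_zero_of_notMem_tsupport
    intro h
    have := hR h
    rw [Metric.mem_closedBall, Complex.dist_eq, sub_zero] at this
    exact absurd this (not_le.mpr hz)
  have hf0 : ∀ z : ℂ, R < ‖z‖ → fderiv ℝ u z = 0 := by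
    intro z hz
    by_contra h
    have hmem : z ∈ tsupport u := support_fderiv_subset (𝕜 := ℝ) (f := u) h
    have := hR hmem
    rw [Metric.mem_closedBall, Complex.dist_eq, sub_zero] at this
    exact absurd this (not_le.mpr hz)
  set G1 : ℝ × ℝ → ℂ := fun q => (1 / 2 : ℂ) * fderiv ℝ u ((q.1 : ℂ) * e q.2) (e q.2) with hG1def
  set G2 : ℝ × ℝ → ℂ :=
    fun q => (1 / 2 : ℂ) * (Complex.I * fderiv ℝ u ((q.1 : ℂ) * e q.2) (Complex.I * e q.2))
    with hG2def
  have hmap : Continuous (fun q : ℝ × ℝ => (q.1 : ℂ) * e q.2) := by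
    exact (Complex.continuous_ofReal.comp continuous_fst).mul
      ((Complex.continuous_exp.comp ((Complex.continuous_ofReal.comp continuous_snd).mul
        continuous_const)))
  have hecont : Continuous (fun q : ℝ × ℝ => e q.2) := by
    exact Complex.continuous_exp.comp ((Complex.continuous_ofReal.comp continuous_snd).mul
      continuous_const)
  have hG1c : Continuous G1 :=
    continuous_const.mul ((fcont.comp hmap).clm_apply hecont)
  have hG2c : Continuous G2 :=
    continuous_const.mul (continuous_const.mul
      ((fcont.comp hmap).clm_apply (continuous_const.mul hecont)))
  have hG10 : ∀ q : ℝ × ℝ, R < q.1 → G1 q = 0 := by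
    intro q hq
    have : fderiv ℝ u ((q.1 : ℂ) * e q.2) = 0 := hf0 _ (lt_of_lt_of_le hq (habs _ _))
    simp [hG1def, this]
  have hG20 : ∀ q : ℝ × ℝ, R < q.1 → G2 q = 0 := by
    intro q hq
    have : fderiv ℝ u ((q.1 : ℂ) * e q.2) = 0 := hf0 _ (lt_of_lt_of_le hq (habs _ _))
    simp [hG2def, this]
  have integr : ∀ H : ℝ × ℝ → ℂ, Continuous H → (∀ q : ℝ × ℝ, R < q.1 → H q = 0) →
      IntegrableOn H (Ioi (0 : ℝ) ×ˢ Ioo (-π) π) := by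
    intro H Hc H0
    have h1 : IntegrableOn H (Ioc (0 : ℝ) R ×ˢ Ioo (-π) π) :=
      (Hc.continuousOn.integrableOn_compact
        ((isCompact_Icc (a := (0:ℝ)) (b := R)).prod (isCompact_Icc (a := -π) (b := π)))).mono_set
        (prod_mono Ioc_subset_Icc_self Ioo_subset_Icc_self)
    have h2 : IntegrableOn H (Ioi R ×ˢ Ioo (-π) π) :=
      integrableOn_zero.congr_fun
        (fun q hq => (H0 q hq.1).symm) (measurableSet_Ioi.prod measurableSet_Ioo)
    apply (h1.union h2).mono_set
    rintro ⟨r, θ⟩ ⟨hr, hθ⟩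
    rcases le_or_gt r R with h | h
    · exact Or.inl ⟨⟨hr, h⟩, hθ⟩
    · exact Or.inr ⟨h, hθ⟩
  have hG1i : IntegrableOn G1 (Ioi (0 : ℝ) ×ˢ Ioo (-π) π) := integr G1 hG1c hG10
  have hG2i : IntegrableOn G2 (Ioi (0 : ℝ) ×ˢ Ioo (-π) π) := integr G2 hG2c hG20
  -- polar coordinates
  rw [← Complex.integral_comp_polarCoord_symm (fun z => dbar u z / z)]
  have htarget : polarCoord.target = Ioi (0 : ℝ) ×ˢ Ioo (-π) π := rfl
  rw [htarget]
  have hcong : EqOn (fun q : ℝ × ℝ =>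
      q.1 • (dbar u (Complex.polarCoord.symm q) / Complex.polarCoord.symm q))
      (fun q => G1 q + G2 q) (Ioi (0 : ℝ) ×ˢ Ioo (-π) π) := by
    rintro ⟨r, θ⟩ ⟨hr, hθ⟩
    have hr0 : (0 : ℝ) < r := hr
    have hrne : (r : ℂ) ≠ 0 := by exact_mod_cast hr0.ne'
    have hz : Complex.polarCoord.symm (r, θ) = (r : ℂ) * e θ := by
      rw [Complex.polarCoord_symm_apply, e_def]
    simp only [hz]
    have step1 : r • (dbar u ((r : ℂ) * e θ) / ((r : ℂ) * e θ))
        = dbar u ((r : ℂ) * e θ) * (e θ)⁻¹ := by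
      rw [Complex.real_smul, div_eq_mul_inv, mul_inv,
        show (dbar u ((r : ℂ) * e θ) * (((r : ℂ))⁻¹ * (e θ)⁻¹))
          = ((r : ℂ))⁻¹ * (dbar u ((r : ℂ) * e θ) * (e θ)⁻¹) from by ring,
        ← mul_assoc, mul_inv_cancel₀ hrne, one_mul]
    rw [step1]
    show dbar u ((r : ℂ) * e θ) * (e θ)⁻¹ = G1 (r, θ) + G2 (r, θ)
    rw [dbar, hG1def, hG2def]
    simp only
    rw [mul_assoc, key]
    ring
  rw [setIntegral_congr_fun (measurableSet_Ioi.prod measurableSet_Ioo) hcong]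
  have swapMP : MeasurePreserving (Prod.swap : ℝ × ℝ → ℝ × ℝ) volume volume := by
    rw [show (volume : Measure (ℝ × ℝ)) = (volume : Measure ℝ).prod volume from
      MeasureTheory.Measure.volume_eq_prod ℝ ℝ]
    exact MeasureTheory.Measure.measurePreserving_swap
  -- split the integral
  rw [integral_add hG1i hG2i]
  -- the G1 integral
  have hinner1 : ∀ θ : ℝ, ∫ r in Ioi (0 : ℝ), G1 (r, θ) = -((1 : ℂ) / 2) * u 0 := by
    intro θ
    have hfd : ∀ r : ℝ, HasDerivAt (fun r : ℝ => (1 / 2 : ℂ) * u ((r : ℂ) * e θ))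
        (G1 (r, θ)) r := by
      intro r
      have h1 : HasDerivAt (fun r : ℝ => ((r : ℂ) * e θ)) (e θ) r := by
        simpa using ((hasDerivAt_id ((r : ℝ) : ℂ)).mul_const (e θ)).comp_ofReal
      have h2 := (udiff ((r : ℂ) * e θ)).hasFDerivAt.comp_hasDerivAt r h1
      simpa [hG1def] using h2.const_mul (1 / 2 : ℂ)
    have hint : IntegrableOn (fun r : ℝ => G1 (r, θ)) (Ioi (0 : ℝ)) := by
      have h1 : IntegrableOn (fun r : ℝ => G1 (r, θ)) (Ioc (0 : ℝ) R) :=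
        ((hG1c.comp (continuous_id.prodMk continuous_const)).continuousOn.integrableOn_compact
          (isCompact_Icc (a := (0:ℝ)) (b := R))).mono_set Ioc_subset_Icc_self
      have h2 : IntegrableOn (fun r : ℝ => G1 (r, θ)) (Ioi R) :=
        integrableOn_zero.congr_fun (fun r hr => (hG10 (r, θ) hr).symm) measurableSet_Ioi
      apply (h1.union h2).mono_set
      intro r hr
      rcases le_or_gt r R with h | h
      · exact Or.inl ⟨hr, h⟩
      · exact Or.inr h
    have htend : Tendsto (fun r : ℝ => (1 / 2 : ℂ) * u ((r : ℂ) * e θ)) atTop (nhds 0) := by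
      apply Tendsto.congr' _ tendsto_const_nhds
      filter_upwards [eventually_gt_atTop R] with r hr
      rw [hu0 _ (lt_of_lt_of_le hr (habs _ _)), mul_zero]
    have := integral_Ioi_of_hasDerivAt_of_tendsto
      (hfd 0).continuousAt.continuousWithinAt (fun r _ => hfd r) hint htend
    rw [this]
    norm_num
  have hG1v : ∫ q in Ioi (0 : ℝ) ×ˢ Ioo (-π) π, G1 q = -(Real.pi : ℂ) * u 0 := by
    have hpre := swapMP.setIntegral_preimage_emb
      MeasurableEquiv.prodComm.measurableEmbedding
      (fun q : ℝ × ℝ => G1 q.swap) (Ioo (-π) π ×ˢ Ioi (0 : ℝ))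
    have hpre2 : ∫ q in Ioi (0 : ℝ) ×ˢ Ioo (-π) π, G1 q
        = ∫ q in Ioo (-π) π ×ˢ Ioi (0 : ℝ), G1 q.swap := by
      rw [← hpre]
      congr 1
      rw [show (Prod.swap ⁻¹' (Ioo (-π) π ×ˢ Ioi (0 : ℝ)) : Set (ℝ × ℝ))
          = Ioi (0 : ℝ) ×ˢ Ioo (-π) π from Set.preimage_swap_prod _ _]
    rw [hpre2]
    have hswapi : IntegrableOn (fun q : ℝ × ℝ => G1 q.swap)
        (Ioo (-π) π ×ˢ Ioi (0 : ℝ)) ((volume : Measure ℝ).prod volume) := by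
      have hmp : MeasurePreserving (Prod.swap : ℝ × ℝ → ℝ × ℝ)
          (volume.restrict (Ioi (0 : ℝ) ×ˢ Ioo (-π) π))
          (((volume : Measure ℝ).prod volume).restrict (Ioo (-π) π ×ˢ Ioi (0 : ℝ))) := by
        have h := swapMP.restrict_preimage (s := Ioo (-π) π ×ˢ Ioi (0 : ℝ)) (measurableSet_Ioo.prod measurableSet_Ioi)
        rw [Set.preimage_swap_prod] at h
        rw [show ((volume : Measure ℝ).prod volume) = (volume : Measure (ℝ × ℝ)) from
          (MeasureTheory.Measure.volume_eq_prod ℝ ℝ).symm]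
        exact h
      have := (hmp.integrable_comp_emb MeasurableEquiv.prodComm.measurableEmbedding
        (g := fun q : ℝ × ℝ => G1 q.swap)).mpr
      apply (hmp.integrable_comp_emb
        MeasurableEquiv.prodComm.measurableEmbedding).mp
      show Integrable ((fun q : ℝ × ℝ => G1 q.swap) ∘ Prod.swap) _
      have : ((fun q : ℝ × ℝ => G1 q.swap) ∘ Prod.swap) = G1 := by
        funext q; simp [Function.comp]
      rw [this]
      exact hG1i
    rw [show ((volume : Measure (ℝ × ℝ))) = (volume : Measure ℝ).prod volume from
      MeasureTheory.Measure.volume_eq_prod ℝ ℝ]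
    rw [setIntegral_prod _ hswapi]
    simp only [Prod.swap_prod_mk]
    rw [setIntegral_congr_fun measurableSet_Ioo (fun θ _ => hinner1 θ)]
    rw [setIntegral_const, measureReal_def, Real.volume_Ioo]
    rw [ENNReal.toReal_ofReal (by linarith [Real.pi_pos])]
    rw [Complex.real_smul]
    push_cast
    ring
  -- the G2 integral
  have hG2v : ∫ q in Ioi (0 : ℝ) ×ˢ Ioo (-π) π, G2 q = 0 := by
    rw [show ((volume : Measure (ℝ × ℝ))) = (volume : Measure ℝ).prod volume from
      MeasureTheory.Measure.volume_eq_prod ℝ ℝ]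
    have hG2i' : IntegrableOn G2 (Ioi (0 : ℝ) ×ˢ Ioo (-π) π)
        ((volume : Measure ℝ).prod volume) := by
      rw [show ((volume : Measure ℝ).prod volume) = (volume : Measure (ℝ × ℝ)) from
        (MeasureTheory.Measure.volume_eq_prod ℝ ℝ).symm]
      exact hG2i
    rw [setIntegral_prod _ hG2i']
    have hinner2 : ∀ r ∈ Ioi (0:ℝ), ∫ θ in Ioo (-π) π, G2 (r, θ) = 0 := by
      intro r hr
      have hr0 : (0 : ℝ) < r := hr
      have hrne : (r : ℂ) ≠ 0 := by exact_mod_cast hr0.ne'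
      have hfd : ∀ θ : ℝ, HasDerivAt (fun θ : ℝ => (Complex.I / (2 * r)) * u ((r : ℂ) * e θ))
          (G2 (r, θ)) θ := by
        intro θ
        have h1 : HasDerivAt (fun θ : ℝ => ((r : ℂ) * e θ)) ((r : ℂ) * (Complex.I * e θ)) θ :=
          (hasDerivAt_e θ).const_mul _
        have h2 := (udiff ((r : ℂ) * e θ)).hasFDerivAt.comp_hasDerivAt θ h1
        have h3 := h2.const_mul (Complex.I / (2 * r))
        refine h3.congr_deriv ?_
        have h4 : fderiv ℝ u ((r : ℂ) * e θ) ((r : ℂ) * (Complex.I * e θ))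
            = (r : ℂ) * fderiv ℝ u ((r : ℂ) * e θ) (Complex.I * e θ) := by
          have := (fderiv ℝ u ((r : ℂ) * e θ)).map_smul r (Complex.I * e θ)
          simpa [Complex.real_smul] using this
        rw [h4, hG2def]
        simp only
        field_simp
      have heq : ∫ θ in Ioo (-π) π, G2 (r, θ) = ∫ θ in (-π)..π, G2 (r, θ) := by
        rw [intervalIntegral.integral_of_le (by linarith [Real.pi_pos]),
          integral_Ioc_eq_integral_Ioo]
      have hint : IntervalIntegrable (fun θ => G2 (r, θ)) volume (-π) π := by
        apply Continuous.intervalIntegrable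
        exact hG2c.comp (continuous_const.prodMk continuous_id)
      rw [heq, intervalIntegral.integral_eq_sub_of_hasDerivAt (fun θ _ => hfd θ) hint]
      have hepi : e π = e (-π) := by
        rw [e, e, Complex.ofReal_neg, neg_mul, Complex.exp_neg, Complex.exp_pi_mul_I]
        norm_num
      rw [hepi]
      ring
    rw [setIntegral_congr_fun measurableSet_Ioi hinner2]
    simp
  rw [hG1v, hG2v, add_zero]

end CPompeiu

/-- The one-dimensional case of the Stokes–Leray formula: for a smooth compactly
supported `u : ℂ → ℂ` and `p ∈ ℂ`, one has `∫_ℂ (∂̄u)(z)/(z − p) dA(z) = −π·u(p)`. -/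
theorem integral_dbar_div_sub_eq_neg_pi_smul
    (u : ℂ → ℂ) (hu : ContDiff ℝ (⊤ : ℕ∞) u) (hsupp : HasCompactSupport u) (p : ℂ) :
    ∫ z : ℂ, dbar u z / (z - p) = -(Real.pi : ℂ) * u p := by
  set v : ℂ → ℂ := fun z => u (z + p) with hv
  have hvd : ContDiff ℝ (⊤ : ℕ∞) v := hu.comp (contDiff_id.add contDiff_const)
  have hvs : HasCompactSupport v := hsupp.comp_homeomorph (Homeomorph.addRight p)
  have hfd : ∀ z : ℂ, fderiv ℝ v z = fderiv ℝ u (z + p) := by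
    intro z
    have h1 : HasFDerivAt (fun w : ℂ => w + p) (ContinuousLinearMap.id ℝ ℂ) z :=
      (hasFDerivAt_id z).add_const p
    have h2 := ((hu.differentiable (by simp)) (z + p)).hasFDerivAt.comp z h1
    rw [show (fderiv ℝ u (z + p)).comp (ContinuousLinearMap.id ℝ ℂ) = fderiv ℝ u (z + p) from
      ContinuousLinearMap.comp_id _] at h2
    exact h2.fderiv
  have hdbar : ∀ z : ℂ, dbar v z = dbar u (z + p) := by
    intro z
    rw [dbar, dbar, hfd]
  have htrans : ∫ z : ℂ, dbar u z / (z - p) = ∫ z : ℂ, dbar v z / z := by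
    rw [show (fun z : ℂ => dbar v z / z) = fun z : ℂ => dbar u (z + p) / ((z + p) - p) by
      funext z; rw [hdbar]; ring_nf]
    exact (integral_add_right_eq_self (fun z : ℂ => dbar u z / (z - p)) p).symm
  rw [htrans, CPompeiu.aux v hvd hvs]
  simp [hv]
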